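/- Let H be a Hilbert space, Π an orthogonal projection, 𝒜 a densely defined closed antisymmetric operator with ΠAΠ = 0 (where composition is defined), and η > 0. Define A = -η(η² - Π𝒜²Π)^{-1} Π𝒜 (on the domain of 𝒜*). Then for every f in the domain, ‖Af‖ ≤ (1/2)‖(1-Π)f‖ and ‖𝒜Af‖ ≤ η‖(1-Π)f‖, and moreover ΠA = A. -/

import Mathlib

open RealInnerProductSpace

/-!
Pairing the defining equation `η² u - P𝒜²P u = -η P𝒜 f` of `u = A f` with `u` and using the
antisymmetry of `𝒜` gives the energy identity `η² ‖u‖² + ‖𝒜 u‖² = η ⟪(1 - P) f, 𝒜 u⟫`;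
the `P f` part drops out because `u` lies in the range of `P` and `P𝒜P = 0`. Cauchy–Schwarz
then bounds the left side by `η ‖(1 - P) f‖ ‖𝒜 u‖`, and completing the square in `‖𝒜 u‖`
yields both estimates.
-/

lemma le_half_and_le_mul_of_sq_add_sq_le {η a b g : ℝ} (hη : 0 < η) (hg : 0 ≤ g)
    (h : η ^ 2 * a ^ 2 + b ^ 2 ≤ η * g * b) : a ≤ g / 2 ∧ b ≤ η * g := by
  constructor
  · have hsq : a ^ 2 ≤ (g / 2) ^ 2 := by
      have : η ^ 2 * a ^ 2 ≤ η ^ 2 * (g / 2) ^ 2 := by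
        nlinarith [sq_nonneg (b - η * g / 2)]
      exact le_of_mul_le_mul_left this (by positivity)
    exact abs_le_of_sq_le_sq' hsq (by positivity) |>.2
  · nlinarith [mul_nonneg hη.le hg, sq_nonneg (η * a)]

namespace ContinuousLinearMap

lemma apply_eq_self_of_smul_eq_apply {𝕜 : Type*} [NontriviallyNormedField 𝕜]
    {F : Type*} [NormedAddCommGroup F] [NormedSpace 𝕜 F] {P : F →L[𝕜] F}
    (hP : P.comp P = P) {c : 𝕜} (hc : c ≠ 0) {u w : F} (h : c • u = P w) : P u = u := by
  have hu : u = P (c⁻¹ • w) := by rw [map_smul, ← h, inv_smul_smul₀ hc]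
  rw [hu, ← comp_apply, hP]

variable {E : Type*} [NormedAddCommGroup E] [InnerProductSpace ℝ E]

lemma energy_identity {P 𝒜 : E →L[ℝ] E} (hPsymm : ∀ x y : E, ⟪P x, y⟫ = ⟪x, P y⟫)
    (hanti : ∀ u v : E, ⟪𝒜 u, v⟫ = -⟪u, 𝒜 v⟫) {η : ℝ} {u f : E} (hPu : P u = u)
    (hPAu : P (𝒜 u) = 0) (h : η ^ 2 • u - P (𝒜 (𝒜 (P u))) = -η • P (𝒜 f)) :
    η ^ 2 * ‖u‖ ^ 2 + ‖𝒜 u‖ ^ 2 = η * ⟪f - P f, 𝒜 u⟫ := by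
  have hquad : ⟪P (𝒜 (𝒜 (P u))), u⟫ = -‖𝒜 u‖ ^ 2 := by
    rw [hPsymm, hPu, hanti, real_inner_self_eq_norm_sq]
  have hPf : ⟪P f, 𝒜 u⟫ = 0 := by rw [hPsymm, hPAu, inner_zero_right]
  have hsource : ⟪P (𝒜 f), u⟫ = -⟪f - P f, 𝒜 u⟫ := by
    rw [hPsymm, hPu, hanti, inner_sub_left, hPf, sub_zero]
  have hpair := congrArg (fun w => ⟪w, u⟫) h
  simp only [inner_sub_left, real_inner_smul_left, real_inner_self_eq_norm_sq] at hpair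
  rw [hquad, hsource] at hpair
  linarith

end ContinuousLinearMap

open ContinuousLinearMap in
theorem stmt_7_general {H : Type*} [NormedAddCommGroup H] [InnerProductSpace ℝ H]
    (P 𝒜 A : H →L[ℝ] H)
    (hPsymm : ∀ x y : H, ⟪P x, y⟫ = ⟪x, P y⟫)
    (hPidem : P.comp P = P)
    (hanti : ∀ u v : H, ⟪𝒜 u, v⟫ = -⟪u, 𝒜 v⟫)
    (hPAP : (P.comp 𝒜).comp P = 0)
    (η : ℝ) (hη : 0 < η)
    (hdef : ∀ f : H, η^2 • A f - P (𝒜 (𝒜 (P (A f)))) = -η • P (𝒜 f)) :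
    ∀ f : H, ‖A f‖ ≤ (1/2) * ‖f - P f‖
      ∧ ‖𝒜 (A f)‖ ≤ η * ‖f - P f‖
      ∧ P (A f) = A f := by
  intro f
  have hPu : P (A f) = A f := by
    refine apply_eq_self_of_smul_eq_apply hPidem (pow_ne_zero 2 hη.ne')
      (w := 𝒜 (𝒜 (P (A f))) - η • 𝒜 f) ?_
    rw [map_sub, map_smul]
    linear_combination (norm := module) hdef f
  have hPAu : P (𝒜 (A f)) = 0 := by
    simpa only [comp_apply, zero_apply, hPu] using DFunLike.congr_fun hPAP (A f)
  have henergy := energy_identity hPsymm hanti hPu hPAu (hdef f)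
  have hbound : η ^ 2 * ‖A f‖ ^ 2 + ‖𝒜 (A f)‖ ^ 2 ≤ η * ‖f - P f‖ * ‖𝒜 (A f)‖ := by
    rw [henergy, mul_assoc]
    exact mul_le_mul_of_nonneg_left (real_inner_le_norm _ _) hη.le
  obtain ⟨hAf, h𝒜Af⟩ := le_half_and_le_mul_of_sq_add_sq_le hη (norm_nonneg _) hbound
  exact ⟨by linarith, h𝒜Af, hPu⟩

/-- DMS-type regularization bound: with `P` an orthogonal projection, `𝒜`
antisymmetric with `P𝒜P = 0`, `η > 0`, and `A = -η(η² - P𝒜²P)⁻¹ P𝒜`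
(characterized by the equation `(η² - P𝒜²P)(A f) = -η P𝒜 f`), one has
`‖A f‖ ≤ ½‖(1-P)f‖`, `‖𝒜 A f‖ ≤ η‖(1-P)f‖` and `P A = A`. -/
theorem stmt_7 {H : Type*} [NormedAddCommGroup H] [InnerProductSpace ℝ H]
    [CompleteSpace H]
    (P 𝒜 A : H →L[ℝ] H)
    (hPsymm : ∀ x y : H, ⟪P x, y⟫ = ⟪x, P y⟫)
    (hPidem : P.comp P = P)
    (hanti : ∀ u v : H, ⟪𝒜 u, v⟫ = -⟪u, 𝒜 v⟫)
    (hPAP : (P.comp 𝒜).comp P = 0)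
    (η : ℝ) (hη : 0 < η)
    (hdef : ∀ f : H, η^2 • A f - P (𝒜 (𝒜 (P (A f)))) = -η • P (𝒜 f)) :
    ∀ f : H, ‖A f‖ ≤ (1/2) * ‖f - P f‖
      ∧ ‖𝒜 (A f)‖ ≤ η * ‖f - P f‖
      ∧ P (A f) = A f :=
  stmt_7_general P 𝒜 A hPsymm hPidem hanti hPAP η hη hdef
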